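/- Let W ∈ L²(ℤ_p × ℤ_p), W_in ∈ L²(ℤ_p × ℤ_p), ξ ∈ L²(ℤ_p), and let φ : ℝ → ℝ be Lipschitz with constant L_φ and φ(0) = 0, with 0 < L_φ ‖W‖₂ < 1. For an input x ∈ L²(ℤ_p), let h(x) denote the unique solution in L²(ℤ_p) of h(u) = ∫_{ℤ_p} W(u,y) φ(h(y)) dμ(y) + ∫_{ℤ_p} W_in(u,y) x(y) dμ(y) + ξ(u). Then for all x₁, x₂ ∈ L²(ℤ_p), ‖h(x₁) − h(x₂)‖₂ ≤ (1 − L_φ ‖W‖₂)⁻¹ ‖W_in‖₂ ‖x₁ − x₂‖₂; in particular the hidden state depends continuously on the input x. -/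

import Mathlib

/-!
Subtracting the two fixed-point equations removes `ξ` and leaves
`h₁ - h₂ = T_W (φ ∘ h₁ - φ ∘ h₂) + T_{W_in} (x₁ - x₂)`, where `T_K f u = ∫ K (u, y) f y dy`.
By Cauchy–Schwarz in `y` and Fubini, `‖T_K f‖₂ ≤ ‖K‖₂ ‖f‖₂` (the Hilbert–Schmidt bound), and
`φ` is `Lφ`-Lipschitz, so `d = ‖h₁ - h₂‖₂` satisfies `d ≤ Lφ ‖W‖₂ d + ‖W_in‖₂ ‖x₁ - x₂‖₂`.
As `d < ∞` and `Lφ ‖W‖₂ < 1`, this rearranges to the claim.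
-/

open MeasureTheory
open scoped NNReal ENNReal

noncomputable instance (p : ℕ) [Fact p.Prime] : MeasurableSpace ℤ_[p] := borel _
instance (p : ℕ) [Fact p.Prime] : BorelSpace ℤ_[p] := ⟨rfl⟩

/-- The normalized Haar measure on the compact additive group `ℤ_[p]`
(so that `padicHaar p Set.univ = 1`). -/
noncomputable def padicHaar (p : ℕ) [Fact p.Prime] : Measure ℤ_[p] :=
  Measure.addHaarMeasure (⊤ : TopologicalSpace.PositiveCompacts ℤ_[p])

instance (p : ℕ) [Fact p.Prime] : IsFiniteMeasure (padicHaar p) := by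
  unfold padicHaar; infer_instance

theorem ENNReal.le_inv_one_sub_mul_of_le_mul_add {a b d : ℝ≥0∞} (hd : d ≠ ∞) (ha : a < 1)
    (h : d ≤ a * d + b) : d ≤ (1 - a)⁻¹ * b := by
  have h1a : 1 - a ≠ 0 := (tsub_pos_of_lt ha).ne'
  rw [← ENNReal.mul_le_iff_le_inv h1a (ENNReal.sub_ne_top ENNReal.one_ne_top),
    ENNReal.sub_mul fun _ _ => hd, one_mul]
  exact tsub_le_iff_left.mpr h

theorem LipschitzWith.eLpNorm_comp_sub_le {α E F : Type*} [MeasurableSpace α] {μ : Measure α}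
    [NormedAddCommGroup E] [NormedAddCommGroup F] {φ : E → F} {L : ℝ≥0}
    (hφ : LipschitzWith L φ) (f g : α → E) (p : ℝ≥0∞) :
    eLpNorm (fun x => φ (f x) - φ (g x)) p μ ≤ L * eLpNorm (fun x => f x - g x) p μ := by
  simpa [ENNReal.smul_def] using eLpNorm_le_nnreal_smul_eLpNorm_of_ae_le_mul
    (.of_forall fun x => by
      simpa [← NNReal.coe_le_coe, dist_eq_norm] using hφ.dist_le_mul (f x) (g x)) p

namespace MeasureTheory

variable {α β : Type*} [MeasurableSpace α] [MeasurableSpace β] {μ : Measure α} {ν : Measure β}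

theorem enorm_integral_mul_le_eLpNorm_mul_eLpNorm {f g : β → ℝ}
    (hf : AEStronglyMeasurable f ν) (hg : AEStronglyMeasurable g ν) :
    ‖∫ y, f y * g y ∂ν‖ₑ ≤ eLpNorm f 2 ν * eLpNorm g 2 ν := by
  refine (enorm_integral_le_lintegral_enorm _).trans ?_
  rw [← eLpNorm_one_eq_lintegral_enorm]
  simpa using eLpNorm_le_eLpNorm_mul_eLpNorm'_of_norm (p := 2) (q := 2) (r := 1) hf hg (· * ·) 1
    (.of_forall fun y => by simp [norm_mul])

theorem eLpNorm_two_rpow_two {E : Type*} [NormedAddCommGroup E] (f : α → E) (μ : Measure α) :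
    eLpNorm f 2 μ ^ (2 : ℝ) = ∫⁻ x, ‖f x‖ₑ ^ (2 : ℝ) ∂μ := by
  simpa using eLpNorm_nnreal_pow_eq_lintegral (f := f) (μ := μ) (p := 2) two_ne_zero

variable [SFinite ν]

theorem MemLp.prod_right_ae [SFinite μ] {E : Type*} [NormedAddCommGroup E] {f : α × β → E}
    {p : ℝ≥0∞} (hf : MemLp f p (μ.prod ν)) (hp0 : p ≠ 0) (hp : p ≠ ∞) :
    ∀ᵐ x ∂μ, MemLp (fun y => f (x, y)) p ν := by
  filter_upwards [(hf.integrable_norm_rpow hp0 hp).prod_right_ae, hf.1.prodMk_left] with x hx hfx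
  exact (integrable_norm_rpow_iff hfx hp0 hp).mp hx

theorem AEStronglyMeasurable.integral_kernel_mul {K : α × β → ℝ} {f : β → ℝ}
    (hK : AEStronglyMeasurable K (μ.prod ν)) (hf : AEStronglyMeasurable f ν) :
    AEStronglyMeasurable (fun x => ∫ y, K (x, y) * f y ∂ν) μ :=
  (hK.mul (hf.comp_quasiMeasurePreserving Measure.quasiMeasurePreserving_snd)).integral_prod_right'

theorem eLpNorm_integral_kernel_mul_le {K : α × β → ℝ} {f : β → ℝ}
    (hK : AEStronglyMeasurable K (μ.prod ν)) (hf : AEStronglyMeasurable f ν) :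
    eLpNorm (fun x => ∫ y, K (x, y) * f y ∂ν) 2 μ ≤ eLpNorm K 2 (μ.prod ν) * eLpNorm f 2 ν := by
  have hK2 : AEMeasurable (fun z => ‖K z‖ₑ ^ (2 : ℝ)) (μ.prod ν) := hK.enorm.pow_const _
  have hpointwise : ∀ᵐ x ∂μ, ‖∫ y, K (x, y) * f y ∂ν‖ₑ ^ (2 : ℝ)
      ≤ (∫⁻ y, ‖K (x, y)‖ₑ ^ (2 : ℝ) ∂ν) * eLpNorm f 2 ν ^ (2 : ℝ) := by
    filter_upwards [hK.prodMk_left] with x hKx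
    rw [← eLpNorm_two_rpow_two, ← ENNReal.mul_rpow_of_nonneg _ _ zero_le_two]
    gcongr
    exact enorm_integral_mul_le_eLpNorm_mul_eLpNorm hKx hf
  rw [← ENNReal.rpow_le_rpow_iff two_pos, ENNReal.mul_rpow_of_nonneg _ _ zero_le_two,
    eLpNorm_two_rpow_two, eLpNorm_two_rpow_two, lintegral_prod _ hK2,
    ← lintegral_mul_const'' _ hK2.lintegral_prod_right']
  exact lintegral_mono_ae hpointwise

theorem ae_integral_kernel_mul_sub {K : α × β → ℝ} {f g : β → ℝ} [SFinite μ]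
    (hK : MemLp K 2 (μ.prod ν)) (hf : MemLp f 2 ν) (hg : MemLp g 2 ν) :
    ∀ᵐ x ∂μ, ∫ y, K (x, y) * (f y - g y) ∂ν
      = ∫ y, K (x, y) * f y ∂ν - ∫ y, K (x, y) * g y ∂ν := by
  filter_upwards [hK.prod_right_ae two_ne_zero ENNReal.ofNat_ne_top] with x hKx
  simp_rw [mul_sub]
  exact integral_sub (hKx.integrable_mul hf) (hKx.integrable_mul hg)

end MeasureTheory

theorem stmt_7_general (p : ℕ) [Fact p.Prime]
    (W Win : ℤ_[p] × ℤ_[p] → ℝ) (ξ : ℤ_[p] → ℝ)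
    (hW : MemLp W 2 ((padicHaar p).prod (padicHaar p)))
    (hWin : MemLp Win 2 ((padicHaar p).prod (padicHaar p)))
    (φ : ℝ → ℝ) (Lφ : ℝ≥0) (hφ : LipschitzWith Lφ φ) (hφ0 : φ 0 = 0)
    (hlt : (Lφ : ℝ≥0∞) * eLpNorm W 2 ((padicHaar p).prod (padicHaar p)) < 1)
    (x₁ x₂ : ℤ_[p] → ℝ) (hx₁ : MemLp x₁ 2 (padicHaar p)) (hx₂ : MemLp x₂ 2 (padicHaar p))
    (h₁ h₂ : ℤ_[p] → ℝ) (hh₁ : MemLp h₁ 2 (padicHaar p)) (hh₂ : MemLp h₂ 2 (padicHaar p))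
    (hfix₁ : ∀ᵐ u ∂(padicHaar p),
      h₁ u = ∫ y, W (u, y) * φ (h₁ y) ∂(padicHaar p)
          + ∫ y, Win (u, y) * x₁ y ∂(padicHaar p) + ξ u)
    (hfix₂ : ∀ᵐ u ∂(padicHaar p),
      h₂ u = ∫ y, W (u, y) * φ (h₂ y) ∂(padicHaar p)
          + ∫ y, Win (u, y) * x₂ y ∂(padicHaar p) + ξ u) :
    eLpNorm (fun u => h₁ u - h₂ u) 2 (padicHaar p)
      ≤ (1 - (Lφ : ℝ≥0∞) * eLpNorm W 2 ((padicHaar p).prod (padicHaar p)))⁻¹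
          * eLpNorm Win 2 ((padicHaar p).prod (padicHaar p))
          * eLpNorm (fun u => x₁ u - x₂ u) 2 (padicHaar p) := by
  set μ := padicHaar p
  have hφh₁ : MemLp (fun y => φ (h₁ y)) 2 μ := hφ.comp_memLp hφ0 hh₁
  have hφh₂ : MemLp (fun y => φ (h₂ y)) 2 μ := hφ.comp_memLp hφ0 hh₂
  have hdiff : (fun u => h₁ u - h₂ u) =ᵐ[μ]
      (fun u => ∫ y, W (u, y) * (φ (h₁ y) - φ (h₂ y)) ∂μ)
        + fun u => ∫ y, Win (u, y) * (x₁ y - x₂ y) ∂μ := by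
    filter_upwards [hfix₁, hfix₂, ae_integral_kernel_mul_sub hW hφh₁ hφh₂,
      ae_integral_kernel_mul_sub hWin hx₁ hx₂] with u e₁ e₂ eW eWin
    rw [Pi.add_apply, eW, eWin, e₁, e₂]
    ring
  have hcontr : eLpNorm (fun u => h₁ u - h₂ u) 2 μ
      ≤ Lφ * eLpNorm W 2 (μ.prod μ) * eLpNorm (fun u => h₁ u - h₂ u) 2 μ
        + eLpNorm Win 2 (μ.prod μ) * eLpNorm (fun u => x₁ u - x₂ u) 2 μ := calc
    _ = eLpNorm ((fun u => ∫ y, W (u, y) * (φ (h₁ y) - φ (h₂ y)) ∂μ)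
          + fun u => ∫ y, Win (u, y) * (x₁ y - x₂ y) ∂μ) 2 μ := eLpNorm_congr_ae hdiff
    _ ≤ eLpNorm (fun u => ∫ y, W (u, y) * (φ (h₁ y) - φ (h₂ y)) ∂μ) 2 μ
          + eLpNorm (fun u => ∫ y, Win (u, y) * (x₁ y - x₂ y) ∂μ) 2 μ :=
      eLpNorm_add_le (hW.1.integral_kernel_mul (hφh₁.sub hφh₂).1)
        (hWin.1.integral_kernel_mul (hx₁.sub hx₂).1) one_le_two
    _ ≤ eLpNorm W 2 (μ.prod μ) * eLpNorm (fun y => φ (h₁ y) - φ (h₂ y)) 2 μ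
          + eLpNorm Win 2 (μ.prod μ) * eLpNorm (fun u => x₁ u - x₂ u) 2 μ :=
      add_le_add (eLpNorm_integral_kernel_mul_le hW.1 (hφh₁.sub hφh₂).1)
        (eLpNorm_integral_kernel_mul_le hWin.1 (hx₁.sub hx₂).1)
    _ ≤ eLpNorm W 2 (μ.prod μ) * (Lφ * eLpNorm (fun u => h₁ u - h₂ u) 2 μ)
          + eLpNorm Win 2 (μ.prod μ) * eLpNorm (fun u => x₁ u - x₂ u) 2 μ := by
      gcongr
      exact hφ.eLpNorm_comp_sub_le h₁ h₂ 2
    _ = _ := by ring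
  rw [mul_assoc]
  exact ENNReal.le_inv_one_sub_mul_of_le_mul_add (hh₁.sub hh₂).eLpNorm_lt_top.ne hlt hcontr

/-- In the contraction regime, the hidden state depends
`(1 − Lφ‖W‖₂)⁻¹‖W_in‖₂`-Lipschitz-continuously on the input `x`. -/
theorem stmt_7 (p : ℕ) [Fact p.Prime]
    (W Win : ℤ_[p] × ℤ_[p] → ℝ) (ξ : ℤ_[p] → ℝ)
    (hW : MemLp W 2 ((padicHaar p).prod (padicHaar p)))
    (hWin : MemLp Win 2 ((padicHaar p).prod (padicHaar p)))
    (hξ : MemLp ξ 2 (padicHaar p))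
    (φ : ℝ → ℝ) (Lφ : ℝ≥0) (hφ : LipschitzWith Lφ φ) (hφ0 : φ 0 = 0)
    (hpos : 0 < (Lφ : ℝ≥0∞) * eLpNorm W 2 ((padicHaar p).prod (padicHaar p)))
    (hlt : (Lφ : ℝ≥0∞) * eLpNorm W 2 ((padicHaar p).prod (padicHaar p)) < 1)
    (x₁ x₂ : ℤ_[p] → ℝ) (hx₁ : MemLp x₁ 2 (padicHaar p)) (hx₂ : MemLp x₂ 2 (padicHaar p))
    (h₁ h₂ : ℤ_[p] → ℝ) (hh₁ : MemLp h₁ 2 (padicHaar p)) (hh₂ : MemLp h₂ 2 (padicHaar p))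
    (hfix₁ : ∀ᵐ u ∂(padicHaar p),
      h₁ u = ∫ y, W (u, y) * φ (h₁ y) ∂(padicHaar p)
          + ∫ y, Win (u, y) * x₁ y ∂(padicHaar p) + ξ u)
    (hfix₂ : ∀ᵐ u ∂(padicHaar p),
      h₂ u = ∫ y, W (u, y) * φ (h₂ y) ∂(padicHaar p)
          + ∫ y, Win (u, y) * x₂ y ∂(padicHaar p) + ξ u) :
    eLpNorm (fun u => h₁ u - h₂ u) 2 (padicHaar p)
      ≤ (1 - (Lφ : ℝ≥0∞) * eLpNorm W 2 ((padicHaar p).prod (padicHaar p)))⁻¹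
          * eLpNorm Win 2 ((padicHaar p).prod (padicHaar p))
          * eLpNorm (fun u => x₁ u - x₂ u) 2 (padicHaar p) :=
  stmt_7_general p W Win ξ hW hWin φ Lφ hφ hφ0 hlt x₁ x₂ hx₁ hx₂ h₁ h₂ hh₁ hh₂ hfix₁ hfix₂
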